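/- Let V be a finite-dimensional real vector space and W a finite-dimensional linear subspace of the space of symmetric bilinear forms on V. If (v₀,v₁,…,vₙ) ∈ V^{n+1} is W-independent, then the linear map V → (W*)^{n+1} sending v to the tuple of functionals (w ↦ w(v,v₀), w ↦ w(v,v₁), …, w ↦ w(v,vₙ)) is surjective. -/

import Mathlib

/-!
With `φ(w₀, …, wₙ) := Σⱼ wⱼ(vⱼ, −)`, the `W`-independence of `(v₀, …, vₙ)` says exactly that
`φ : Wⁿ⁺¹ → V*` is injective: its range is `φ(span(v₀, …, vₙ) ⊗ W)`, of dimension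
`(n + 1) · dim W`. Injectivity of `φ` is surjectivity of the transposed map `V → (Wⁿ⁺¹)*`,
and by symmetry of the forms this transpose is the evaluation map of the theorem.
-/

open Module

/-- `φ(span(vs) ⊗ W)`: the subspace of `V* = V →ₗ[ℝ] ℝ` spanned by the functionals
`w(v, −)` for `w ∈ W` and `v ∈ span(s)`. -/
noncomputable def phiSpan {V : Type*} [AddCommGroup V] [Module ℝ V]
    (W : Submodule ℝ (V →ₗ[ℝ] V →ₗ[ℝ] ℝ)) (s : Set V) : Submodule ℝ (V →ₗ[ℝ] ℝ) :=
  Submodule.span ℝ {f | ∃ w ∈ W, ∃ v ∈ Submodule.span ℝ s, f = w v}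

/-- A tuple `(v₁, …, vₙ)` is `W`-independent if `φ(span(v₁,…,vₙ) ⊗ W) ⊆ V*` has
dimension `n · dim W`. -/
def WIndep {V : Type*} [AddCommGroup V] [Module ℝ V]
    (W : Submodule ℝ (V →ₗ[ℝ] V →ₗ[ℝ] ℝ)) {n : ℕ} (vs : Fin n → V) : Prop :=
  finrank ℝ (phiSpan W (Set.range vs)) = n * finrank ℝ W

/- Instance search does not find `Submodule.addCommGroup` for submodules of
`V →ₗ[ℝ] V →ₗ[ℝ] ℝ` on its own. -/
instance {V : Type*} [AddCommGroup V] [Module ℝ V] (W : Submodule ℝ (V →ₗ[ℝ] V →ₗ[ℝ] ℝ)) :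
    AddCommGroup W :=
  @Submodule.addCommGroup ℝ (V →ₗ[ℝ] V →ₗ[ℝ] ℝ) _ _ _ W

section PhiOfFamily

variable {V : Type*} [AddCommGroup V] [Module ℝ V] (W : Submodule ℝ (V →ₗ[ℝ] V →ₗ[ℝ] ℝ))
  {ι : Type*} [Fintype ι] [DecidableEq ι] (vs : ι → V)

/-- `(wᵢ)ᵢ ↦ φ(Σᵢ vᵢ ⊗ wᵢ)`. -/
noncomputable def phiOfFamily : (ι → W) →ₗ[ℝ] Module.Dual ℝ V :=
  LinearMap.lsum ℝ (fun _ => W) ℝ fun i => LinearMap.applyₗ (vs i) ∘ₗ W.subtype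

theorem phiOfFamily_apply (c : ι → W) :
    phiOfFamily W vs c = ∑ i, (c i : V →ₗ[ℝ] V →ₗ[ℝ] ℝ) (vs i) := by
  simp [phiOfFamily]

theorem phiOfFamily_single (i : ι) (w : W) :
    phiOfFamily W vs (Pi.single i w) = (w : V →ₗ[ℝ] V →ₗ[ℝ] ℝ) (vs i) := by
  rw [phiOfFamily, LinearMap.lsum_piSingle]
  rfl

theorem range_phiOfFamily : LinearMap.range (phiOfFamily W vs) = phiSpan W (Set.range vs) := by
  apply le_antisymm
  · rintro _ ⟨c, rfl⟩
    rw [phiOfFamily_apply]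
    exact Submodule.sum_mem _ fun i _ => Submodule.subset_span
      ⟨c i, (c i).2, vs i, Submodule.subset_span ⟨i, rfl⟩, rfl⟩
  · rw [phiSpan, Submodule.span_le]
    rintro _ ⟨w, hw, v, hv, rfl⟩
    obtain ⟨a, rfl⟩ := (Submodule.mem_span_range_iff_exists_fun ℝ).mp hv
    exact ⟨fun i => a i • ⟨w, hw⟩, by simp [phiOfFamily_apply]⟩

end PhiOfFamily

theorem phiOfFamily_injective_of_WIndep {V : Type*} [AddCommGroup V] [Module ℝ V]
    [FiniteDimensional ℝ V] (W : Submodule ℝ (V →ₗ[ℝ] V →ₗ[ℝ] ℝ)) {n : ℕ} (vs : Fin n → V)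
    (hvs : WIndep W vs) : Function.Injective (phiOfFamily W vs) := by
  have hdomain : finrank ℝ (Fin n → W) = n * finrank ℝ W := by
    simp [Module.finrank_pi_fintype]
  have hrank := (phiOfFamily W vs).finrank_range_add_finrank_ker
  rw [range_phiOfFamily, hvs, hdomain] at hrank
  exact LinearMap.ker_eq_bot.mp (Submodule.finrank_eq_zero.mp (by omega))

theorem dual_evaluation_surjective_of_WIndep
    {V : Type*} [AddCommGroup V] [Module ℝ V] [FiniteDimensional ℝ V]
    (W : Submodule ℝ (V →ₗ[ℝ] V →ₗ[ℝ] ℝ))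
    (hsymm : ∀ w ∈ W, ∀ u v : V, w u v = w v u)
    (n : ℕ) (vs : Fin (n + 1) → V) (hvs : WIndep W vs) :
    Function.Surjective (fun v : V => fun j : Fin (n + 1) =>
      ((LinearMap.applyₗ (vs j)) ∘ₗ (LinearMap.applyₗ v) ∘ₗ W.subtype :
        Module.Dual ℝ W)) := by
  intro g
  obtain ⟨v, hv⟩ := (LinearMap.flip_surjective_iff₁ (B := phiOfFamily W vs)).mpr
    (phiOfFamily_injective_of_WIndep W vs hvs) (LinearMap.lsum ℝ (fun _ => W) ℝ g)
  refine ⟨v, funext fun j => LinearMap.ext fun w => ?_⟩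
  have hvw := LinearMap.congr_fun hv (Pi.single j w)
  rw [LinearMap.flip_apply, phiOfFamily_single, LinearMap.lsum_piSingle] at hvw
  simpa [hsymm _ w.2 v (vs j)] using hvw
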